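/- arXiv:2509.24437 — 6 statements merged into one kernel-verified Lean document; each statement's English description precedes it below -/
import Mathlib

section
/- Let Y be a Riesz space and Z an ideal in Y. Let y₁,…,yₘ ∈ Y and z₁,…,zₘ ∈ Z be such that ∑ᵢ zᵢ ≤ ∑ᵢ yᵢ. Suppose there exists z ∈ Z with z ≤ yᵢ for each i. Then there exist elements ẑ₁,…,ẑₘ ∈ Z such that ∑ᵢ ẑᵢ = ∑ᵢ zᵢ and ẑᵢ ≤ yᵢ for each i. -/
/-!
Induct on the number of summands, splitting off `y 0`. With `t = s - n • z`, where `n` is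
the number of remaining summands, the piece `w 0 = y 0 ⊓ t` lies between `z ⊓ t` and `t`, hence
in the solid subgroup `Z`, and the rest `s - w 0 = (s - y 0) ⊔ n • z` is still dominated by the
remaining sum, since each of the remaining `y i` lies above `z`.
-/

open LatticeOrderedAddCommGroup

namespace LatticeOrderedAddCommGroup.IsSolid

variable {Y : Type*} [AddCommGroup Y] [Lattice Y] [AddLeftMono Y] {Z : AddSubgroup Y}

theorem abs_mem (hZ : IsSolid (Z : Set Y)) {a : Y} (ha : a ∈ Z) : |a| ∈ Z :=
  hZ ha (abs_abs a).le

theorem mem_of_le_of_le (hZ : IsSolid (Z : Set Y)) {a b x : Y} (ha : a ∈ Z) (hb : b ∈ Z)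
    (hax : a ≤ x) (hxb : x ≤ b) : x ∈ Z := by
  have hxa : x - a ∈ Z := by
    refine hZ (Z.sub_mem hb ha) ?_
    rw [abs_of_nonneg (sub_nonneg.2 hax), abs_of_nonneg (sub_nonneg.2 (hax.trans hxb))]
    exact sub_le_sub_right hxb a
  simpa using Z.add_mem hxa ha

theorem inf_mem (hZ : IsSolid (Z : Set Y)) {a b : Y} (ha : a ∈ Z) (hb : b ∈ Z) :
    a ⊓ b ∈ Z := by
  have hlower : a - |a - b| ≤ a ⊓ b :=
    le_inf (sub_le_self a (abs_nonneg _)) (sub_le_comm.1 (le_abs_self _))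
  exact hZ.mem_of_le_of_le (Z.sub_mem ha (hZ.abs_mem (Z.sub_mem ha hb))) ha hlower inf_le_left

theorem exists_sum_eq_of_le_sum (hZ : IsSolid (Z : Set Y)) {n : ℕ} {y : Fin (n + 1) → Y}
    {s z : Y} (hs : s ∈ Z) (hsy : s ≤ ∑ i, y i) (hz : z ∈ Z) (hzy : ∀ i, z ≤ y i) :
    ∃ w : Fin (n + 1) → Y, (∀ i, w i ∈ Z) ∧ ∑ i, w i = s ∧ ∀ i, w i ≤ y i := by
  induction n generalizing s with
  | zero =>
    refine ⟨fun _ => s, fun _ => hs, by simp, fun i => ?_⟩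
    simpa [Fin.fin_one_eq_zero i] using hsy
  | succ n ih =>
    set t := s - (n + 1) • z
    set w₀ := y 0 ⊓ t
    have ht : t ∈ Z := Z.sub_mem hs (Z.nsmul_mem hz _)
    have hw₀ : w₀ ∈ Z :=
      hZ.mem_of_le_of_le (hZ.inf_mem hz ht) ht (inf_le_inf_right _ (hzy 0)) inf_le_right
    have hzT : (n + 1) • z ≤ ∑ i : Fin (n + 1), y i.succ := by
      simpa using Finset.card_nsmul_le_sum Finset.univ (fun i : Fin (n + 1) => y i.succ) z
        fun i _ => hzy i.succ
    have hrest : s - w₀ ≤ ∑ i : Fin (n + 1), y i.succ := by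
      refine sub_le_comm.1 (le_inf ?_ (sub_le_sub_left hzT s))
      rw [sub_le_iff_le_add, ← Fin.sum_univ_succ]
      exact hsy
    obtain ⟨w, hwZ, hwsum, hwy⟩ := ih (Z.sub_mem hs hw₀) hrest fun i => hzy i.succ
    refine ⟨Fin.cons w₀ w, ?_, ?_, ?_⟩
    · exact Fin.forall_fin_succ.2 ⟨hw₀, hwZ⟩
    · rw [Fin.sum_cons, hwsum, add_sub_cancel]
    · exact Fin.forall_fin_succ.2 ⟨inf_le_left, hwy⟩

end LatticeOrderedAddCommGroup.IsSolid

/-- Riesz decomposition relative to an ideal `Z` of a Riesz space. -/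
theorem stmt_1 {Y : Type*} [AddCommGroup Y] [Lattice Y]
    [CovariantClass Y Y (· + ·) (· ≤ ·)] [Module ℝ Y]
    (Z : Submodule ℝ Y) (hsolid : ∀ x y : Y, |x| ≤ |y| → y ∈ Z → x ∈ Z)
    (m : ℕ) (y : Fin m → Y) (zv : Fin m → Y) (hzv : ∀ i, zv i ∈ Z)
    (hle : ∑ i, zv i ≤ ∑ i, y i)
    (z : Y) (hzZ : z ∈ Z) (hzy : ∀ i, z ≤ y i) :
    ∃ w : Fin m → Y, (∀ i, w i ∈ Z) ∧ (∑ i, w i = ∑ i, zv i) ∧ ∀ i, w i ≤ y i := by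
  have hZ : IsSolid (Z.toAddSubgroup : Set Y) := fun x hx x' hx' => hsolid x' x hx' hx
  cases m with
  | zero => exact ⟨0, fun _ => Z.zero_mem, by simp, fun i => i.elim0⟩
  | succ n =>
    exact hZ.exists_sum_eq_of_le_sum (Z.sum_mem fun i _ => hzv i) hle hzZ hzy
end

section
/- Let Y be a real vector space with a Hausdorff locally convex topology, and let U, V be convex subsets of Y with U open and U ∩ V ≠ ∅. Let y ∈ V ∩ cl(U), and suppose π is a (not necessarily continuous) linear functional on Y with π(y) ≤ π(y') for all y' ∈ U ∩ V. Then there exist linear functionals π₁ and π₂ on Y such that π₁ is continuous, π₁(y) ≤ π₁(u) for all u ∈ U, π₂(y) ≤ π₂(v) for all v ∈ V, and π = π₁ + π₂. -/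
/-!
Separate the open convex set `U × (-∞, π y)` from the graph of `π` over `V` in `Y × ℝ`; they are
disjoint because `π ≥ π y` on `U ∩ V`. The separating functional has the form
`(x, t) ↦ g x + c t` with `g` continuous, and `c > 0` because both sets meet the vertical line
through a point of `U ∩ V`. Since `(y, π y)` lies both on the graph and in the closure of the open
set, the separating hyperplane passes through it, so `π₁ = -g / c` and `π₂ = π - π₁` work.
-/

section

variable {E : Type*} [AddCommGroup E] [Module ℝ E] [TopologicalSpace E]

theorem geometric_hahn_banach_open_prod_Iio_graph [IsTopologicalAddGroup E] [ContinuousSMul ℝ E]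
    {U V : Set E} (hU : Convex ℝ U) (hV : Convex ℝ V) (hUopen : IsOpen U) (φ : E →ₗ[ℝ] ℝ) {a : ℝ}
    (hφ : ∀ x ∈ U ∩ V, a ≤ φ x) :
    ∃ (g : StrongDual ℝ E) (c u : ℝ), (∀ x ∈ U, ∀ t < a, g x + c * t < u) ∧
      ∀ v ∈ V, u ≤ g v + c * φ v := by
  have hdisj : Disjoint (U ×ˢ Set.Iio a) ((LinearMap.id.prod φ) '' V) := by
    rw [Set.disjoint_left]
    rintro _ ⟨hxU, ht⟩ ⟨v, hvV, rfl⟩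
    exact (hφ v ⟨hxU, hvV⟩).not_gt ht
  obtain ⟨f, u, hfA, hfB⟩ := geometric_hahn_banach_open (hU.prod (convex_Iio a))
    (hUopen.prod isOpen_Iio) (hV.linear_image _) hdisj
  have hf : ∀ x t, f (x, t) = f.comp (.inl ℝ E ℝ) x + f (0, 1) * t := fun x t => by
    have hxt : (x, t) = (x, 0) + t • ((0 : E), (1 : ℝ)) := by simp
    rw [hxt, map_add, map_smul, smul_eq_mul, mul_comm]
    rfl
  refine ⟨f.comp (.inl ℝ E ℝ), f (0, 1), u, fun x hx t ht => ?_, fun v hv => ?_⟩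
  · rw [← hf]
    exact hfA (x, t) ⟨hx, ht⟩
  · rw [← hf]
    exact hfB (v, φ v) ⟨v, hv, rfl⟩

theorem add_mul_le_of_mem_closure (g : StrongDual ℝ E) {U : Set E} {c a u : ℝ}
    (h : ∀ x ∈ U, ∀ t < a, g x + c * t < u) {x : E} (hx : x ∈ closure U) :
    g x + c * a ≤ u := by
  have hcont : Continuous fun z : E × ℝ => g z.1 + c * z.2 := by fun_prop
  have hsub : U ×ˢ Set.Iio a ⊆ {z : E × ℝ | g z.1 + c * z.2 < u} :=
    fun z hz => h z.1 hz.1 z.2 hz.2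
  have hmem : (x, a) ∈ closure (U ×ˢ Set.Iio a) := by
    rw [closure_prod_eq, closure_Iio]
    exact ⟨hx, Set.mem_Iic.2 le_rfl⟩
  exact closure_lt_subset_le hcont continuous_const (closure_mono hsub hmem)

end

theorem stmt_2_general {Y : Type*} [AddCommGroup Y] [Module ℝ Y]
    [TopologicalSpace Y] [IsTopologicalAddGroup Y] [ContinuousSMul ℝ Y]
    (U V : Set Y) (hU : Convex ℝ U) (hV : Convex ℝ V) (hUopen : IsOpen U)
    (hUV : (U ∩ V).Nonempty) (y : Y) (hy : y ∈ V ∩ closure U)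
    (π : Y →ₗ[ℝ] ℝ) (hπ : ∀ y' ∈ U ∩ V, π y ≤ π y') :
    ∃ (π₁ π₂ : Y →ₗ[ℝ] ℝ), Continuous π₁ ∧ (∀ u ∈ U, π₁ y ≤ π₁ u) ∧
      (∀ v ∈ V, π₂ y ≤ π₂ v) ∧ π = π₁ + π₂ := by
  obtain ⟨w, hwU, hwV⟩ := hUV
  obtain ⟨hyV, hycl⟩ := hy
  obtain ⟨g, c, u, hUsep, hVsep⟩ := geometric_hahn_banach_open_prod_Iio_graph hU hV hUopen π hπ
  have hyu : g y + c * π y = u :=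
    le_antisymm (add_mul_le_of_mem_closure g hUsep hycl) (hVsep y hyV)
  have hc : 0 < c := by
    have hw₁ := hUsep w hwU (π y - 1) (sub_one_lt _)
    have hw₂ := hVsep w hwV
    have hw₃ := hπ w ⟨hwU, hwV⟩
    nlinarith
  set π₁ : StrongDual ℝ Y := (-c⁻¹) • g with hπ₁
  refine ⟨π₁, π - π₁, π₁.continuous, fun x hx => ?_, fun v hv => ?_, (add_sub_cancel _ _).symm⟩
  · have hgx := add_mul_le_of_mem_closure g hUsep (subset_closure hx)
    simp only [hπ₁, ContinuousLinearMap.coe_coe, smul_apply, smul_eq_mul]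
    exact mul_le_mul_of_nonpos_left (by linarith) (by simp [hc.le])
  · have hgv := hVsep v hv
    simp only [hπ₁, LinearMap.sub_apply, ContinuousLinearMap.coe_coe, smul_apply,
      smul_eq_mul, neg_mul, sub_neg_eq_add]
    rw [← mul_le_mul_iff_of_pos_left hc]
    field_simp
    linarith

/-- Decomposition of a supporting linear functional into a continuous
part supporting `U` and a part supporting `V`. -/
theorem stmt_2 {Y : Type*} [AddCommGroup Y] [Module ℝ Y]
    [TopologicalSpace Y] [IsTopologicalAddGroup Y] [ContinuousSMul ℝ Y]
    [LocallyConvexSpace ℝ Y] [T2Space Y]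
    (U V : Set Y) (hU : Convex ℝ U) (hV : Convex ℝ V) (hUopen : IsOpen U)
    (hUV : (U ∩ V).Nonempty) (y : Y) (hy : y ∈ V ∩ closure U)
    (π : Y →ₗ[ℝ] ℝ) (hπ : ∀ y' ∈ U ∩ V, π y ≤ π y') :
    ∃ (π₁ π₂ : Y →ₗ[ℝ] ℝ), Continuous π₁ ∧ (∀ u ∈ U, π₁ y ≤ π₁ u) ∧
      (∀ v ∈ V, π₂ y ≤ π₂ v) ∧ π = π₁ + π₂ :=
  stmt_2_general U V hU hV hUopen hUV y hy π hπ
end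

section
/- Let B be a Banach lattice, N = {1,…,n} agents with strongly monotone, continuous, quasi-concave utilities uᵢ(·, z) : B₊ → ℝ for each z in a set 𝒴 of public projects. If (x₁,…,xₙ, y) is a cost share equilibrium allocation with cost distribution function ρ and price system π, then (x₁,…,xₙ, y) belongs to the Aubin σ-core: there is no Aubin coalition γ ∈ [0,1]ⁿ∖{0}, public project z, and private goods assignment (ξ₁,…,ξₙ) with ∑ᵢ γᵢξᵢ + (∑ᵢ γᵢρ(i,z))c(z) = ∑ᵢ γᵢeᵢ and uᵢ(ξᵢ, z) > uᵢ(xᵢ, y) for all i with γᵢ > 0. -/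
/-! A blocking coalition would have to pay, at the prices `π z`, strictly more than the value of
its endowment, because each of its members prefers their bundle to the equilibrium one and so
cannot afford it. But valuing the coalition's feasibility equation with the linear functional
`π z` shows that its weighted expenditure equals the value of its weighted endowment. -/

theorem Finset.sum_mul_lt_sum_mul_of_pos_weight {ι R : Type*} [Ring R] [LinearOrder R]
    [IsStrictOrderedRing R] {s : Finset ι} {w a b : ι → R} (hw : ∀ i ∈ s, 0 ≤ w i)
    (hab : ∀ i ∈ s, 0 < w i → a i < b i) (hpos : ∃ i ∈ s, 0 < w i) :
    ∑ i ∈ s, w i * a i < ∑ i ∈ s, w i * b i := by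
  obtain ⟨i₀, hi₀s, hi₀⟩ := hpos
  refine Finset.sum_lt_sum (fun i hi => ?_)
    ⟨i₀, hi₀s, mul_lt_mul_of_pos_left (hab i₀ hi₀s hi₀) hi₀⟩
  rcases (hw i hi).eq_or_lt with hzero | hpos
  · simp [← hzero]
  · exact mul_le_mul_of_nonneg_left (hab i hi hpos).le hpos.le

theorem LinearMap.weighted_expenditure_eq {ι R M : Type*} [Fintype ι] [CommSemiring R]
    [AddCommMonoid M] [Module R M] (φ : M →ₗ[R] R) {γ ρ : ι → R} {ξ e : ι → M} {v : M}
    (hfeas : ∑ i, γ i • ξ i + (∑ i, γ i * ρ i) • v = ∑ i, γ i • e i) :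
    ∑ i, γ i * (φ (ξ i) + ρ i * φ v) = ∑ i, γ i * φ (e i) := by
  have hval := congrArg φ hfeas
  simp only [map_add, map_sum, map_smul, smul_eq_mul] at hval
  rw [← hval, Finset.sum_mul, ← Finset.sum_add_distrib]
  exact Finset.sum_congr rfl fun i _ => by ring

theorem stmt_10_general {B : Type*} [NormedAddCommGroup B] [Lattice B] [NormedSpace ℝ B]
    {Y : Type*} (n : ℕ)
    (u : Fin n → B → Y → ℝ) (e : Fin n → B)
    (c : Y → B)
    (π : Y → B →L[ℝ] ℝ) (ρ : Fin n → Y → ℝ)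
    (x : Fin n → B) (y : Y)
    -- cost share equilibrium with price system π and cost distribution ρ
    (hopt : ∀ i, ∀ (ζ : B) (w : Y), 0 ≤ ζ →
      π w ζ + ρ i w * π w (c w) ≤ π w (e i) → u i ζ w ≤ u i (x i) y) :
    ¬ ∃ (γ : Fin n → ℝ) (z : Y) (ξ : Fin n → B),
      (∀ i, γ i ∈ Set.Icc (0:ℝ) 1) ∧ (∃ i, 0 < γ i) ∧ (∀ i, 0 ≤ ξ i) ∧
      (∑ i, γ i • ξ i + (∑ i, γ i * ρ i z) • c z = ∑ i, γ i • e i) ∧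
      (∀ i, 0 < γ i → u i (x i) y < u i (ξ i) z) := by
  rintro ⟨γ, z, ξ, hγ, ⟨i₀, hi₀⟩, hξ, hfeas, hpref⟩
  have hunaffordable : ∀ i ∈ Finset.univ, 0 < γ i →
      π z (e i) < π z (ξ i) + ρ i z * π z (c z) := fun i _ hi =>
    lt_of_not_ge fun hafford => (hpref i hi).not_ge (hopt i (ξ i) z (hξ i) hafford)
  have hlt := Finset.sum_mul_lt_sum_mul_of_pos_weight (fun i _ => (hγ i).1) hunaffordable
    ⟨i₀, Finset.mem_univ i₀, hi₀⟩
  exact hlt.ne' ((π z : B →ₗ[ℝ] ℝ).weighted_expenditure_eq hfeas)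

/-- A cost share equilibrium allocation belongs to the Aubin σ-core:
no Aubin coalition `γ ∈ [0,1]ⁿ \ {0}` can block it via some project `z` and private
goods assignment `(ξ₁,…,ξₙ)` with
`∑ γᵢξᵢ + (∑ γᵢρ(i,z))·c(z) = ∑ γᵢeᵢ` and `uᵢ(ξᵢ,z) > uᵢ(xᵢ,y)` on the support. -/
theorem stmt_10 {B : Type*} [NormedAddCommGroup B] [Lattice B] [HasSolidNorm B]
    [IsOrderedAddMonoid B] [NormedSpace ℝ B]
    {Y : Type*} (n : ℕ)
    (u : Fin n → B → Y → ℝ) (e : Fin n → B) (he : ∀ i, 0 ≤ e i)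
    (c : Y → B) (hc : ∀ z, 0 ≤ c z)
    (hcont : ∀ i z, Continuous (fun ξ => u i ξ z))
    (hmono : ∀ i z, ∀ ξ ζ : B, 0 ≤ ζ → ζ ≤ ξ → ζ ≠ ξ → u i ζ z < u i ξ z)
    (hqc : ∀ i z, ∀ ξ ζ : B, ∀ l : ℝ, l ∈ Set.Icc (0:ℝ) 1 →
      min (u i ξ z) (u i ζ z) ≤ u i (l • ξ + (1 - l) • ζ) z)
    (π : Y → B →L[ℝ] ℝ) (ρ : Fin n → Y → ℝ)
    (hρ : ∀ i z, 0 ≤ ρ i z) (hρsum : ∀ z, ∑ i, ρ i z = 1)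
    (x : Fin n → B) (hx : ∀ i, 0 ≤ x i) (y : Y)
    (hfeas : ∑ i, x i + c y = ∑ i, e i)
    -- cost share equilibrium with price system π and cost distribution ρ
    (hbudget : ∀ i, π y (x i) + ρ i y * π y (c y) ≤ π y (e i))
    (hopt : ∀ i, ∀ (ζ : B) (w : Y), 0 ≤ ζ →
      π w ζ + ρ i w * π w (c w) ≤ π w (e i) → u i ζ w ≤ u i (x i) y) :
    ¬ ∃ (γ : Fin n → ℝ) (z : Y) (ξ : Fin n → B),
      (∀ i, γ i ∈ Set.Icc (0:ℝ) 1) ∧ (∃ i, 0 < γ i) ∧ (∀ i, 0 ≤ ξ i) ∧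
      (∑ i, γ i • ξ i + (∑ i, γ i * ρ i z) • c z = ∑ i, γ i • e i) ∧
      (∀ i, 0 < γ i → u i (x i) y < u i (ξ i) z) :=
  stmt_10_general n u e c π ρ x y hopt
end

section
/- Let B be a Banach lattice and suppose (x₁,…,xₙ) ∈ B₊ⁿ and a price π ∈ B*, π ≥ 0, satisfy: for each i, any ξ ∈ B₊ with uᵢ(ξ) > uᵢ(xᵢ) has π(ξ) + kᵢ > π(eᵢ), where kᵢ ≥ 0, uᵢ is continuous and strongly monotone, and ∑ᵢ xᵢ + c = ∑ᵢ eᵢ with ∑ᵢ kᵢ = π(c). If additionally uᵢ(xᵢ + ε𝟙) > uᵢ(xᵢ) for every ε > 0 and every i (monotonicity in the direction of a fixed positive vector 𝟙), then π(xᵢ) + kᵢ = π(eᵢ) for every i. -/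
/-- If strictly preferred bundles are unaffordable for each agent,
endowments are feasible (`∑ xᵢ + c = ∑ eᵢ` with `∑ kᵢ = π(c)`), and utility is
strictly increasing in the direction of a fixed positive vector `𝟙`, then every
agent's budget holds with equality: `π(xᵢ) + kᵢ = π(eᵢ)`. -/
theorem stmt_15 {B : Type*} [NormedAddCommGroup B] [Lattice B] [HasSolidNorm B] [IsOrderedAddMonoid B] [NormedSpace ℝ B]
    (n : ℕ) (u : Fin n → B → ℝ)
    (hcont : ∀ i, Continuous (u i))
    (hmono : ∀ i, ∀ ξ ζ : B, 0 ≤ ζ → ζ ≤ ξ → ζ ≠ ξ → u i ζ < u i ξ)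
    (π : B →L[ℝ] ℝ) (hπ : ∀ x : B, 0 ≤ x → 0 ≤ π x)
    (x e : Fin n → B) (hx : ∀ i, 0 ≤ x i)
    (k : Fin n → ℝ) (hk : ∀ i, 0 ≤ k i)
    (c : B) (hfeas : ∑ i, x i + c = ∑ i, e i) (hkc : ∑ i, k i = π c)
    (one : B) (hone : 0 ≤ one) (hone0 : one ≠ 0)
    (hdir : ∀ i, ∀ ε : ℝ, 0 < ε → u i (x i) < u i (x i + ε • one))
    (hunaff : ∀ i, ∀ ξ : B, 0 ≤ ξ → u i (x i) < u i ξ → π (e i) < π ξ + k i) :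
    ∀ i, π (x i) + k i = π (e i) := by
  -- dyadic multiples of `one` are nonneg
  have hdy : ∀ m : ℕ, (0 : B) ≤ ((2:ℝ)^m)⁻¹ • one := by
    intro m
    induction m with
    | zero => simpa using hone
    | succ m ih =>
      apply nsmul_two_semiclosed
      have : (2 : ℕ) • (((2:ℝ)^(m+1))⁻¹ • one) = ((2:ℝ)^m)⁻¹ • one := by
        rw [two_nsmul, ← two_smul ℝ, smul_smul]
        congr 1
        rw [pow_succ]
        field_simp
      rw [this]
      exact ih
  have hge : ∀ i, π (e i) ≤ π (x i) + k i := by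
    intro i
    have key : ∀ m : ℕ, π (e i) ≤ π (x i + ((2:ℝ)^m)⁻¹ • one) + k i := by
      intro m
      have hεpos : (0:ℝ) < ((2:ℝ)^m)⁻¹ := by positivity
      exact le_of_lt (hunaff i _ (add_nonneg (hx i) (hdy m)) (hdir i _ hεpos))
    have hε0 : Filter.Tendsto (fun m : ℕ => ((2:ℝ)^m)⁻¹) Filter.atTop (nhds 0) := by
      simpa [one_div, inv_pow] using
        tendsto_pow_atTop_nhds_zero_of_lt_one (by norm_num : (0:ℝ) ≤ 2⁻¹)
          (by norm_num : (2:ℝ)⁻¹ < 1)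
    have hcontf : Continuous (fun ε : ℝ => π (x i + ε • one) + k i) := by
      continuity
    have htend : Filter.Tendsto (fun m : ℕ => π (x i + ((2:ℝ)^m)⁻¹ • one) + k i)
        Filter.atTop (nhds (π (x i) + k i)) := by
      have h := (hcontf.tendsto 0).comp hε0
      simpa [Function.comp_def] using h
    exact ge_of_tendsto' htend key
  have hsum : ∑ i, π (e i) = ∑ i, (π (x i) + k i) := by
    rw [Finset.sum_add_distrib, hkc, ← map_sum, ← map_sum, ← map_add, hfeas]
  intro i
  by_contra h
  have hlt : π (e i) < π (x i) + k i := lt_of_le_of_ne (hge i) (Ne.symm h)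
  have : ∑ j, π (e j) < ∑ j, (π (x j) + k j) :=
    Finset.sum_lt_sum (fun j _ => hge j) ⟨i, Finset.mem_univ i, hlt⟩
  exact absurd hsum (ne_of_lt this)
end

section
/- Let B be a Banach lattice and u : B₊ → ℝ quasi-concave. Let (T, μ) be a finite measure space, S ⊆ T with μ(S) > 0, and g : S → B₊ Bochner integrable such that u(g(t)) > α for μ-a.e. t ∈ S. Then the average ḡ = (1/μ(S))∫_S g dμ satisfies u(ḡ) ≥ α; if moreover u is continuous and strongly monotone and the inequality u(g(t)) > α holds on a set of positive measure with values bounded away, one obtains u(ḡ + η) > α for every η ∈ B₊ ∖ {0}. -/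
/-!
The superlevel set `{ξ | α ≤ u ξ}` of a continuous quasi-concave `u` is closed and convex, and so
is the positive cone of a Banach lattice; hence both contain the Bochner average `ḡ` of `g`. Since
`ḡ ≥ 0`, strong monotonicity then gives `α ≤ u ḡ < u (ḡ + η)` for every nonzero `η ≥ 0`.
-/

open MeasureTheory Filter Topology

section NonnegSMul

variable {B : Type*} [AddCommGroup B] [Lattice B] [IsOrderedAddMonoid B] [Module ℝ B]

lemma dyadic_smul_nonneg {x : B} (hx : 0 ≤ x) (n k : ℕ) : 0 ≤ ((k : ℝ) / 2 ^ n) • x := by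
  induction n generalizing k with
  | zero => simpa [Nat.cast_smul_eq_nsmul] using nsmul_nonneg hx k
  | succ n ih =>
    refine nsmul_two_semiclosed ?_
    rw [two_nsmul, ← add_smul]
    convert ih k using 2
    ring

/-- The order of `B` is not assumed compatible with scalar multiplication; this follows from
closedness of the positive cone, by approximating `a` with dyadic rationals. -/
lemma smul_nonneg_of_orderClosedTopology [TopologicalSpace B] [ContinuousSMul ℝ B]
    [OrderClosedTopology B] {a : ℝ} {x : B} (ha : 0 ≤ a) (hx : 0 ≤ x) : 0 ≤ a • x := by
  have hdyadic : Tendsto (fun n : ℕ ↦ (⌊a * 2 ^ n⌋₊ : ℝ) / 2 ^ n) atTop (𝓝 a) :=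
    (tendsto_nat_floor_mul_div_atTop ha).comp (tendsto_pow_atTop_atTop_of_one_lt one_lt_two)
  exact ge_of_tendsto (hdyadic.smul_const x) (.of_forall fun n ↦ dyadic_smul_nonneg hx n _)

lemma convex_setOf_nonneg [TopologicalSpace B] [ContinuousSMul ℝ B] [OrderClosedTopology B] :
    Convex ℝ {x : B | 0 ≤ x} :=
  fun _ hx _ hy _ _ ha hb _ ↦ add_nonneg (smul_nonneg_of_orderClosedTopology ha hx)
    (smul_nonneg_of_orderClosedTopology hb hy)

end NonnegSMul

section Average

variable {E Ω : Type*} [NormedAddCommGroup E] [NormedSpace ℝ E] [CompleteSpace E]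
  [MeasurableSpace Ω] {μ : Measure Ω} {S : Set Ω} {g : Ω → E}

lemma QuasiconcaveOn.le_apply_setAverage {u : E → ℝ} (hqc : QuasiconcaveOn ℝ Set.univ u)
    (hu : UpperSemicontinuous u) (h0 : μ S ≠ 0) (hS : μ S ≠ ⊤) (hg : IntegrableOn g S μ) {α : ℝ}
    (hgα : ∀ᵐ t ∂μ.restrict S, α ≤ u (g t)) : α ≤ u (⨍ t in S, g t ∂μ) := by
  have hconv : Convex ℝ (u ⁻¹' Set.Ici α) := by simpa [Set.preimage, Set.mem_Ici] using hqc α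
  exact hconv.set_average_mem (hu.isClosed_preimage α) h0 hS hgα hg

lemma setAverage_nonneg [Lattice E] [HasSolidNorm E] [IsOrderedAddMonoid E] (h0 : μ S ≠ 0)
    (hS : μ S ≠ ⊤) (hg : IntegrableOn g S μ) (hg0 : ∀ᵐ t ∂μ.restrict S, 0 ≤ g t) :
    0 ≤ ⨍ t in S, g t ∂μ :=
  convex_setOf_nonneg.set_average_mem isClosed_nonneg h0 hS hg0 hg

end Average

theorem stmt_17_general {B : Type*} [NormedAddCommGroup B] [Lattice B] [HasSolidNorm B]
    [IsOrderedAddMonoid B] [NormedSpace ℝ B]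
    [CompleteSpace B]
    (u : B → ℝ) (hcont : Continuous u)
    (hqc : ∀ ξ ζ : B, ∀ l : ℝ, l ∈ Set.Icc (0:ℝ) 1 →
      min (u ξ) (u ζ) ≤ u (l • ξ + (1 - l) • ζ))
    (hmono : ∀ ξ ζ : B, 0 ≤ ζ → ζ ≤ ξ → ζ ≠ ξ → u ζ < u ξ)
    {Ω : Type*} [MeasurableSpace Ω] (μ : Measure Ω) [IsFiniteMeasure μ]
    (S : Set Ω) (hSpos : 0 < μ S)
    (g : Ω → B) (hg : IntegrableOn g S μ)
    (hgpos : ∀ᵐ t ∂μ.restrict S, 0 ≤ g t)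
    (α : ℝ) (hgα : ∀ᵐ t ∂μ.restrict S, α < u (g t)) :
    α ≤ u ((μ S).toReal⁻¹ • ∫ t in S, g t ∂μ) ∧
      ∀ η : B, 0 ≤ η → η ≠ 0 →
        α < u ((μ S).toReal⁻¹ • ∫ t in S, g t ∂μ + η) := by
  have hquasi : QuasiconcaveOn ℝ Set.univ u := by
    refine quasiconcaveOn_iff_min_le.2 ⟨convex_univ, fun ξ _ ζ _ a b ha hb hab ↦ ?_⟩
    obtain rfl : b = 1 - a := by linarith
    exact hqc ξ ζ a ⟨ha, by linarith⟩
  have hmean := hquasi.le_apply_setAverage hcont.upperSemicontinuous hSpos.ne'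
    (measure_ne_top μ S) hg (hgα.mono fun _ ↦ le_of_lt)
  have hmean_nonneg := setAverage_nonneg hSpos.ne' (measure_ne_top μ S) hg hgpos
  rw [setAverage_eq] at hmean hmean_nonneg
  refine ⟨hmean, fun η hη hη0 ↦ hmean.trans_lt (hmono _ _ hmean_nonneg
    (le_add_of_nonneg_right hη) ?_)⟩
  exact fun h ↦ hη0 (left_eq_add.1 h)

/-- Jensen-type property for continuous quasi-concave utilities:
if `u(g(t)) > α` a.e. on `S`, the Bochner average `ḡ` of `g` over `S` satisfies
`u(ḡ) ≥ α`; with continuity and strong monotonicity, adding any nonzero positive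
vector gives the strict inequality `u(ḡ + η) > α`. -/
theorem stmt_17 {B : Type*} [NormedAddCommGroup B] [Lattice B] [HasSolidNorm B]
    [IsOrderedAddMonoid B] [NormedSpace ℝ B]
    [CompleteSpace B]
    (u : B → ℝ) (hcont : Continuous u)
    (hqc : ∀ ξ ζ : B, ∀ l : ℝ, l ∈ Set.Icc (0:ℝ) 1 →
      min (u ξ) (u ζ) ≤ u (l • ξ + (1 - l) • ζ))
    (hmono : ∀ ξ ζ : B, 0 ≤ ζ → ζ ≤ ξ → ζ ≠ ξ → u ζ < u ξ)
    {Ω : Type*} [MeasurableSpace Ω] (μ : Measure Ω) [IsFiniteMeasure μ]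
    (S : Set Ω) (hSm : MeasurableSet S) (hSpos : 0 < μ S)
    (g : Ω → B) (hg : IntegrableOn g S μ)
    (hgpos : ∀ᵐ t ∂μ.restrict S, 0 ≤ g t)
    (α : ℝ) (hgα : ∀ᵐ t ∂μ.restrict S, α < u (g t)) :
    α ≤ u ((μ S).toReal⁻¹ • ∫ t in S, g t ∂μ) ∧
      ∀ η : B, 0 ≤ η → η ≠ 0 →
        α < u ((μ S).toReal⁻¹ • ∫ t in S, g t ∂μ + η) :=
  stmt_17_general u hcont hqc hmono μ S hSpos g hg hgpos α hgα
end

section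
/- In a finite economy with agents N = {1,…,n}, Banach lattice commodity space B, and public projects 𝒴, suppose (x₁,…,xₙ, y) is a cost share equilibrium with price system π and cost distribution ρ. Fix z ∈ 𝒴 and a feasible allocation (γ₁^z,…,γₙ^z, z) satisfying π(z)·γᵢ^z + ρ(i,z)π(z)·c(z) = π(z)·eᵢ for all i. Then for every α = (α₁,…,αₙ) ∈ [0,1]ⁿ, the allocation (x₁,…,xₙ, y) is not z-dominated in the perturbed economy whose endowments are e(z,α)ᵢ = αᵢeᵢ + (1−αᵢ)(γᵢ^z + ρ(i,z)c(z)): there is no (ξ₁,…,ξₙ) ∈ B₊ⁿ with ∑ᵢξᵢ + c(z) = ∑ᵢ e(z,α)ᵢ and uᵢ(ξᵢ, z) > uᵢ(xᵢ, y) for all i ∈ N. -/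
/-!
Every perturbed endowment `αᵢeᵢ + (1 − αᵢ)(γᵢ^z + ρ(i,z)c(z))` has the same value `π(z)·eᵢ`,
because `(γ^z, z)` exhausts each budget. A `z`-dominating allocation `ξ` would, by optimality of
the equilibrium, strictly violate every agent's budget at prices `π(z)`; summing these violations
and using `∑ᵢ ρ(i,z) = 1` shows that `ξ` together with `c(z)` costs strictly more than the total
perturbed endowment, contradicting feasibility.
-/

open Finset

theorem map_smul_add_one_sub_smul_of_map_eq {R E F : Type*} [CommRing R] [AddCommGroup E]
    [Module R E] [FunLike F E R] [LinearMapClass F R E R] (p : F) (a : R) {e f : E}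
    (h : p f = p e) : p (a • e + (1 - a) • f) = p e := by
  rw [map_add, map_smul, map_smul, h, smul_eq_mul, smul_eq_mul]
  ring

theorem map_sum_add_eq_sum_add_mul_of_sum_eq_one {ι R E F : Type*} [Fintype ι] [CommRing R]
    [AddCommGroup E] [Module R E] [FunLike F E R] [LinearMapClass F R E R] (p : F)
    (ξ : ι → E) (c : E) {ρ : ι → R} (hρ : ∑ i, ρ i = 1) :
    p (∑ i, ξ i + c) = ∑ i, (p (ξ i) + ρ i * p c) := by
  rw [sum_add_distrib, ← sum_mul, hρ, one_mul, map_add, map_sum]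

theorem stmt_18_general {B : Type*} [NormedAddCommGroup B] [Lattice B]
    [NormedSpace ℝ B]
    {Y : Type*} (n : ℕ)
    (u : Fin n → B → Y → ℝ) (e : Fin n → B)
    (c : Y → B)
    (π : Y → B →L[ℝ] ℝ) (ρ : Fin n → Y → ℝ)
    (hρsum : ∀ z, ∑ i, ρ i z = 1)
    (x : Fin n → B) (y : Y)
    -- cost share equilibrium: budget feasibility and optimality
    (hopt : ∀ i, ∀ (ζ : B) (w : Y), 0 ≤ ζ →
      π w ζ + ρ i w * π w (c w) ≤ π w (e i) → u i ζ w ≤ u i (x i) y)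
    -- (γ^z, z) is feasible and exhausts each agent's budget with equality
    (z : Y) (γ : Fin n → B)
    (hγbud : ∀ i, π z (γ i) + ρ i z * π z (c z) = π z (e i)) :
    ∀ α : Fin n → ℝ, (∀ i, α i ∈ Set.Icc (0:ℝ) 1) →
      ¬ ∃ ξ : Fin n → B, (∀ i, 0 ≤ ξ i) ∧
        (∑ i, ξ i + c z
          = ∑ i, (α i • e i + (1 - α i) • (γ i + ρ i z • c z))) ∧
        (∀ i, u i (x i) y < u i (ξ i) z) := by
  rintro α - ⟨ξ, hξ, hξfeas, hdom⟩
  have hagents : (univ : Finset (Fin n)).Nonempty := by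
    by_contra hempty
    simpa [not_nonempty_iff_eq_empty.mp hempty] using hρsum z
  have hviolated : ∀ i, π z (e i) < π z (ξ i) + ρ i z * π z (c z) := fun i =>
    lt_of_not_ge fun hle => (hopt i (ξ i) z (hξ i) hle).not_gt (hdom i)
  have hendowment : ∀ i, π z (α i • e i + (1 - α i) • (γ i + ρ i z • c z)) = π z (e i) :=
    fun i => map_smul_add_one_sub_smul_of_map_eq _ _ (by rw [map_add, map_smul, smul_eq_mul, hγbud])
  have hvalue : ∑ i, π z (e i) = ∑ i, (π z (ξ i) + ρ i z * π z (c z)) := by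
    rw [← map_sum_add_eq_sum_add_mul_of_sum_eq_one _ _ _ (hρsum z), hξfeas, map_sum]
    exact sum_congr rfl fun i _ => (hendowment i).symm
  exact (sum_lt_sum_of_nonempty hagents fun i _ => hviolated i).ne hvalue

/-- A cost share equilibrium allocation `(x₁,…,xₙ,y)` is not
`z`-dominated in any perturbed economy whose endowments are
`e(z,α)ᵢ = αᵢeᵢ + (1−αᵢ)(γᵢ^z + ρ(i,z)c(z))`, where `(γ₁^z,…,γₙ^z,z)` is a feasible
allocation exhausting each agent's budget with equality. -/
theorem stmt_18 {B : Type*} [NormedAddCommGroup B] [Lattice B] [HasSolidNorm B]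
    [IsOrderedAddMonoid B] [NormedSpace ℝ B]
    {Y : Type*} (n : ℕ)
    (u : Fin n → B → Y → ℝ) (e : Fin n → B) (he : ∀ i, 0 ≤ e i)
    (c : Y → B) (hc : ∀ z, 0 ≤ c z)
    (π : Y → B →L[ℝ] ℝ) (ρ : Fin n → Y → ℝ)
    (hρ : ∀ i z, 0 ≤ ρ i z) (hρsum : ∀ z, ∑ i, ρ i z = 1)
    (x : Fin n → B) (hx : ∀ i, 0 ≤ x i) (y : Y)
    (hfeas : ∑ i, x i + c y = ∑ i, e i)
    -- cost share equilibrium: budget feasibility and optimality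
    (hbudget : ∀ i, π y (x i) + ρ i y * π y (c y) ≤ π y (e i))
    (hopt : ∀ i, ∀ (ζ : B) (w : Y), 0 ≤ ζ →
      π w ζ + ρ i w * π w (c w) ≤ π w (e i) → u i ζ w ≤ u i (x i) y)
    -- (γ^z, z) is feasible and exhausts each agent's budget with equality
    (z : Y) (γ : Fin n → B) (hγpos : ∀ i, 0 ≤ γ i)
    (hγfeas : ∑ i, γ i + c z = ∑ i, e i)
    (hγbud : ∀ i, π z (γ i) + ρ i z * π z (c z) = π z (e i)) :
    ∀ α : Fin n → ℝ, (∀ i, α i ∈ Set.Icc (0:ℝ) 1) →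
      ¬ ∃ ξ : Fin n → B, (∀ i, 0 ≤ ξ i) ∧
        (∑ i, ξ i + c z
          = ∑ i, (α i • e i + (1 - α i) • (γ i + ρ i z • c z))) ∧
        (∀ i, u i (x i) y < u i (ξ i) z) :=
  stmt_18_general n u e c π ρ hρsum x y hopt z γ hγbud
end
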